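/- The de Casteljau algorithm and the new geometric algorithm agree: for t ∈ (0,1), iterating Q^{(r)}_i := (1−t) Q^{(r-1)}_i + t Q^{(r-1)}_{i+1} starting from Q^{(0)}_i := W_i yields Q^{(n)}_0 equal to the point Q_n computed by the recurrence h_0 = 1, h_k = h_{k-1} t(n−k+1)/(k(1−t)+h_{k-1} t(n−k+1)), Q_k = (1−h_k)Q_{k-1} + h_k W_k; both equal Σ_{k=0}^n W_k B^n_k(t). -/

import Mathlib

/-!
Both algorithms compute the Bézier point `∑ₖ Bⁿₖ(t) Wₖ`. For de Casteljau this is the Pascal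
recurrence `Bʳ⁺¹ₖ = (1 - t) Bʳₖ + t Bʳₖ₋₁` applied to every window `Wᵢ, …, Wᵢ₊ᵣ`. For the geometric
algorithm, `h` is the recurrence of a running weighted average: with partial sums
`Sₖ = ∑_{j ≤ k} Bⁿⱼ(t)`, one has `hₖ = Bⁿₖ(t) / Sₖ` because consecutive weights have ratio
`Bⁿₖ / Bⁿₖ₋₁ = t (n - k + 1) / (k (1 - t))`, and then `Sₖ Qₖ = ∑_{j ≤ k} Bⁿⱼ(t) Wⱼ`; at `k = n`
the partial sum is `1`.
-/

open Finset

/-- The Bernstein polynomial `B^n_k` evaluated at `t`. -/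
def bern (n k : ℕ) (t : ℝ) : ℝ := (n.choose k : ℝ) * t ^ k * (1 - t) ^ (n - k)

theorem sum_range_smul_eq_of_running_average {R E : Type*} [CommRing R] [AddCommGroup E]
    [Module R E] (n : ℕ) (b h : ℕ → R) (W Q : ℕ → E) (hQ0 : Q 0 = W 0)
    (hQ : ∀ k, 1 ≤ k → k ≤ n → Q k = (1 - h k) • Q (k - 1) + h k • W k)
    (hbh : ∀ k, 1 ≤ k → k ≤ n → (∑ i ∈ range (k + 1), b i) * h k = b k) :
    ∀ m ≤ n, (∑ i ∈ range (m + 1), b i) • Q m = ∑ i ∈ range (m + 1), b i • W i := by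
  intro m
  induction m with
  | zero => simp [hQ0]
  | succ m ih =>
    intro hm
    set S := ∑ i ∈ range (m + 1 + 1), b i
    have hS : S = ∑ i ∈ range (m + 1), b i + b (m + 1) := sum_range_succ _ _
    calc S • Q (m + 1) = (S - S * h (m + 1)) • Q m + (S * h (m + 1)) • W (m + 1) := by
          rw [hQ (m + 1) (by omega) hm, Nat.add_sub_cancel, smul_add, smul_smul, smul_smul,
            mul_sub, mul_one]
      _ = (∑ i ∈ range (m + 1), b i) • Q m + b (m + 1) • W (m + 1) := by
          rw [hbh (m + 1) (by omega) hm, hS, add_sub_cancel_right]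
      _ = ∑ i ∈ range (m + 1 + 1), b i • W i := by
          rw [ih (by omega), sum_range_succ _ (m + 1)]

theorem sum_range_mul_eq_of_ratio_recurrence {K : Type*} [Field K] (n : ℕ) (b u v h : ℕ → K)
    (hS : ∀ m ≤ n, ∑ i ∈ range (m + 1), b i ≠ 0) (hv : ∀ k, 1 ≤ k → k ≤ n → v k ≠ 0)
    (hbuv : ∀ k, 1 ≤ k → k ≤ n → b (k - 1) * u k = b k * v k) (hh0 : h 0 = 1)
    (hh : ∀ k, 1 ≤ k → k ≤ n → h k = h (k - 1) * u k / (v k + h (k - 1) * u k)) :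
    ∀ m ≤ n, (∑ i ∈ range (m + 1), b i) * h m = b m := by
  intro m
  induction m with
  | zero => simp [hh0]
  | succ m ih =>
    intro hm
    set S := ∑ i ∈ range (m + 1), b i
    have hSm : S ≠ 0 := hS m (by omega)
    have hS1 : ∑ i ∈ range (m + 1 + 1), b i = S + b (m + 1) := sum_range_succ _ _
    have hSm1 : S + b (m + 1) ≠ 0 := hS1 ▸ hS (m + 1) hm
    have hvm : v (m + 1) ≠ 0 := hv (m + 1) (by omega) hm
    have hhm : h m = b m / S := eq_div_of_mul_eq hSm ((mul_comm _ _).trans (ih (by omega)))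
    have hratio : h m * u (m + 1) = b (m + 1) * v (m + 1) / S := by
      rw [hhm, div_mul_eq_mul_div, ← hbuv (m + 1) (by omega) hm, Nat.add_sub_cancel]
    have hden : v (m + 1) + b (m + 1) * v (m + 1) / S = v (m + 1) * (S + b (m + 1)) / S := by
      field_simp
    rw [hh (m + 1) (by omega) hm, Nat.add_sub_cancel, hratio, hden, hS1]
    field_simp

section Bernstein

variable (t : ℝ)

theorem bern_eq_zero_of_lt {n k : ℕ} (h : n < k) : bern n k t = 0 := by
  simp [bern, Nat.choose_eq_zero_of_lt h]

theorem bern_succ_zero (r : ℕ) : bern (r + 1) 0 t = (1 - t) * bern r 0 t := by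
  simp [bern, pow_succ]
  ring

theorem bern_succ_succ (r k : ℕ) :
    bern (r + 1) (k + 1) t = (1 - t) * bern r (k + 1) t + t * bern r k t := by
  rcases lt_trichotomy k r with hlt | rfl | hgt
  · obtain ⟨j, rfl⟩ := Nat.exists_eq_add_of_lt hlt
    simp only [bern, Nat.choose_succ_succ, show k + j + 1 + 1 - (k + 1) = j + 1 by omega,
      show k + j + 1 - (k + 1) = j by omega, show k + j + 1 - k = j + 1 by omega]
    push_cast
    ring
  · simp [bern, pow_succ]
    ring
  · rw [bern_eq_zero_of_lt t (by omega), bern_eq_zero_of_lt t (by omega),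
      bern_eq_zero_of_lt t hgt]
    ring

theorem sum_bern (n : ℕ) : ∑ k ∈ range (n + 1), bern n k t = 1 := by
  have := congrArg (Polynomial.eval t) (bernsteinPolynomial.sum ℝ n)
  simpa [Polynomial.eval_finsetSum, bernsteinPolynomial, bern, mul_assoc] using this

theorem bern_mul_succ (n k : ℕ) :
    bern n k t * (t * ((n - k : ℕ) : ℝ)) = bern n (k + 1) t * (((k + 1 : ℕ) : ℝ) * (1 - t)) := by
  rcases lt_or_ge k n with hlt | hge
  · have hchoose : (n.choose (k + 1) : ℝ) * ((k + 1 : ℕ) : ℝ) = n.choose k * ((n - k : ℕ) : ℝ) := by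
      exact_mod_cast Nat.choose_succ_right_eq n k
    have hpow : (1 - t) ^ (n - k) = (1 - t) ^ (n - (k + 1)) * (1 - t) := by
      rw [← pow_succ, show n - (k + 1) + 1 = n - k by omega]
    simp only [bern, hpow, pow_succ t k]
    linear_combination (-(t ^ k * t * (1 - t) ^ (n - (k + 1)) * (1 - t))) * hchoose
  · simp [Nat.sub_eq_zero_of_le hge, bern_eq_zero_of_lt t (Nat.lt_succ_of_le hge)]

theorem bern_pos {t : ℝ} (ht : t ∈ Set.Ioo (0 : ℝ) 1) {n k : ℕ} (hk : k ≤ n) :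
    0 < bern n k t := by
  have := Nat.choose_pos hk
  have := ht.1
  have := sub_pos.2 ht.2
  unfold bern
  positivity

theorem sum_range_bern_pos {t : ℝ} (ht : t ∈ Set.Ioo (0 : ℝ) 1) {n m : ℕ} (hm : m ≤ n) :
    0 < ∑ k ∈ range (m + 1), bern n k t :=
  sum_pos (fun k hk => bern_pos ht (by have := mem_range.1 hk; omega)) nonempty_range_add_one

variable {E : Type*} [AddCommGroup E] [Module ℝ E]

theorem sum_bern_succ_smul (r : ℕ) (f : ℕ → E) :
    ∑ k ∈ range (r + 2), bern (r + 1) k t • f k =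
      (1 - t) • ∑ k ∈ range (r + 1), bern r k t • f k
        + t • ∑ k ∈ range (r + 1), bern r k t • f (k + 1) := by
  calc ∑ k ∈ range (r + 2), bern (r + 1) k t • f k
        = (1 - t) • (∑ k ∈ range (r + 1), bern r (k + 1) t • f (k + 1) + bern r 0 t • f 0)
          + t • ∑ k ∈ range (r + 1), bern r k t • f (k + 1) := by
        simp only [sum_range_succ' _ (r + 1), bern_succ_succ, bern_succ_zero, add_smul,
          sum_add_distrib, smul_add, smul_sum, smul_smul]
        abel
    _ = _ := by
        rw [← sum_range_succ' (fun k => bern r k t • f k), sum_range_succ,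
          bern_eq_zero_of_lt t (Nat.lt_succ_self r), zero_smul, add_zero]

theorem deCasteljau_eq_sum_bern (n : ℕ) (W : ℕ → E) (C : ℕ → ℕ → E)
    (hC0 : ∀ i ≤ n, C 0 i = W i)
    (hCrec : ∀ r, 1 ≤ r → r ≤ n → ∀ i ≤ n - r,
      C r i = (1 - t) • C (r - 1) i + t • C (r - 1) (i + 1)) :
    ∀ r ≤ n, ∀ i ≤ n - r, C r i = ∑ k ∈ range (r + 1), bern r k t • W (i + k) := by
  intro r
  induction r with
  | zero => intro _ i hi; simp [bern, hC0 i (by omega)]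
  | succ r ih =>
    intro hr i hi
    rw [hCrec (r + 1) (by omega) hr i hi, Nat.add_sub_cancel, ih (by omega) i (by omega),
      ih (by omega) (i + 1) (by omega), sum_bern_succ_smul]
    simp only [add_assoc, add_comm 1]

end Bernstein

theorem stmt18 (n d : ℕ) (t : ℝ) (ht : t ∈ Set.Ioo (0 : ℝ) 1)
    (W : ℕ → Fin d → ℝ)
    (C : ℕ → ℕ → Fin d → ℝ)
    (hC0 : ∀ i ≤ n, C 0 i = W i)
    (hCrec : ∀ r, 1 ≤ r → r ≤ n → ∀ i ≤ n - r,
      C r i = (1 - t) • C (r - 1) i + t • C (r - 1) (i + 1))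
    (h : ℕ → ℝ) (Q : ℕ → Fin d → ℝ)
    (hh0 : h 0 = 1) (hQ0 : Q 0 = W 0)
    (hh : ∀ k, 1 ≤ k → k ≤ n →
      h k = h (k - 1) * t * ((n - k + 1 : ℕ) : ℝ) /
        ((k : ℝ) * (1 - t) + h (k - 1) * t * ((n - k + 1 : ℕ) : ℝ)))
    (hQ : ∀ k, 1 ≤ k → k ≤ n → Q k = (1 - h k) • Q (k - 1) + h k • W k) :
    C n 0 = Q n ∧ Q n = ∑ k ∈ range (n + 1), bern n k t • W k := by
  have hratio : ∀ k, 1 ≤ k → k ≤ n →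
      bern n (k - 1) t * (t * ((n - k + 1 : ℕ) : ℝ)) = bern n k t * ((k : ℝ) * (1 - t)) := by
    rintro (_ | k) hk hkn
    · omega
    · rw [Nat.add_sub_cancel, show n - (k + 1) + 1 = n - k by omega]
      exact bern_mul_succ t n k
  have hbh := sum_range_mul_eq_of_ratio_recurrence n (bern n · t)
    (fun k => t * ((n - k + 1 : ℕ) : ℝ)) (fun k => (k : ℝ) * (1 - t)) h
    (fun _ hm => (sum_range_bern_pos ht hm).ne')
    (fun k _ _ => mul_ne_zero (by positivity) (sub_pos.2 ht.2).ne') hratio hh0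
    (fun k hk hkn => (hh k hk hkn).trans (by ring))
  have hQn := sum_range_smul_eq_of_running_average n _ h W Q hQ0 hQ
    (fun k _ hk => hbh k hk) n le_rfl
  rw [sum_bern, one_smul] at hQn
  have hCn := deCasteljau_eq_sum_bern t n W C hC0 hCrec n le_rfl 0 (Nat.zero_le _)
  simp only [zero_add] at hCn
  exact ⟨hCn.trans hQn.symm, hQn⟩
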